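/- Let L : M_n(ℂ) → [0,∞) be convex, unitarily invariant (L(UAV) = L(A) for all unitaries U, V), with L(0) = 0. If A and B are positive semidefinite matrices with A ≤ B in the Löwner order, then L(A) ≤ L(B). -/

import Mathlib

open Matrix
open scoped ComplexOrder

noncomputable section

/-- The positive semidefinite square root of a positive semidefinite matrix
(re-declared with the definition it had in Mathlib of December 2024, where it has since been removed) -/
noncomputable def Matrix.PosSemidef.sqrt {n 𝕜 : Type*} [Fintype n] [DecidableEq n] [RCLike 𝕜]
    {A : Matrix n n 𝕜} (hA : A.PosSemidef) : Matrix n n 𝕜 :=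
  hA.1.eigenvectorUnitary.1 * diagonal ((↑) ∘ (√·) ∘ hA.1.eigenvalues) *
  (star hA.1.eigenvectorUnitary : Matrix n n 𝕜)

theorem Matrix.PosSemidef.posSemidef_sqrt {n 𝕜 : Type*} [Fintype n] [DecidableEq n] [RCLike 𝕜]
    {A : Matrix n n 𝕜} (hA : A.PosSemidef) : PosSemidef hA.sqrt := by
  unfold Matrix.PosSemidef.sqrt
  rw [star_eq_conjTranspose]
  refine PosSemidef.mul_mul_conjTranspose_same ?_ _
  refine posSemidef_diagonal_iff.mpr fun i => ?_
  simp only [Function.comp_apply]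
  exact_mod_cast Real.sqrt_nonneg _

/-- n×n complex matrices -/
abbrev Mat (n : ℕ) := Matrix (Fin n) (Fin n) ℂ

/-- modulus |A| = sqrt (Aᴴ A) -/
noncomputable def matAbs {n : ℕ} (A : Mat n) : Mat n :=
  (Matrix.posSemidef_conjTranspose_mul_self A).sqrt

/-- spectral (operator) norm -/
noncomputable def specNorm {n : ℕ} (A : Mat n) : ℝ :=
  ‖Matrix.toEuclideanCLM (𝕜 := ℂ) (n := Fin n) A‖

/-- Löwner order: `A ≤ B` iff `B - A` is positive semidefinite -/
def loewnerLE {n : ℕ} (A B : Mat n) : Prop := (B - A).PosSemidef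

/-- singular values of `A`, arranged in non-increasing order -/
noncomputable def sval {n : ℕ} (A : Mat n) : Fin n → ℝ :=
  fun i =>
    let e := ((Matrix.posSemidef_conjTranspose_mul_self A).posSemidef_sqrt).1.eigenvalues
    (e ∘ Tuple.sort e) i.rev

/-- singular values indexed by naturals (0 beyond the size) -/
noncomputable def svalNat {n : ℕ} (A : Mat n) (k : ℕ) : ℝ :=
  if h : k < n then sval A ⟨k, h⟩ else 0

/-- eigenvalues of a Hermitian matrix, arranged in non-increasing order -/
noncomputable def eigsDesc {n : ℕ} {A : Mat n} (hA : A.IsHermitian) : Fin n → ℝ :=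
  fun i => (hA.eigenvalues ∘ Tuple.sort hA.eigenvalues) i.rev

/-!
By unitary invariance and the spectral theorem, `L A = L (diagonal λ(A))`, where `λ(A)` lists the
eigenvalues in decreasing order, up to a relabelling of the indices that does not depend on `A`. Weyl's monotonicity theorem gives `λᵢ(A) ≤ λᵢ(B)` for `A ≤ B`.
Finally `d ↦ L (diagonal d)` is convex and, by unitary invariance, unchanged when one coordinate
changes sign; an even convex function of one variable increases with `|t|`, so changing the
coordinates one at a time shows that `L (diagonal d)` increases with each `|dᵢ|`.
-/

open Function Module RCLike Submodule
open scoped InnerProductSpace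

theorem Submodule.exists_mem_inf_ne_zero_of_finrank_lt_add {K V : Type*} [DivisionRing K]
    [AddCommGroup V] [Module K V] [FiniteDimensional K V] {s t : Submodule K V}
    (h : finrank K V < finrank K s + finrank K t) : ∃ x ∈ s ⊓ t, x ≠ 0 :=
  (Submodule.ne_bot_iff _).mp fun hbot =>
    h.not_ge (finrank_add_finrank_le_of_disjoint (disjoint_iff.mpr hbot))

theorem OrthonormalBasis.repr_apply_eq_zero_of_mem_span {ι 𝕜 E : Type*} [Fintype ι]
    [DecidableEq ι] [RCLike 𝕜] [NormedAddCommGroup E] [InnerProductSpace 𝕜 E]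
    (b : OrthonormalBasis ι 𝕜 E) {s : Finset ι} {x : E}
    (hx : x ∈ span 𝕜 (Set.range fun j : s => b j)) {i : ι} (hi : i ∉ s) : b.repr x i = 0 := by
  rw [b.repr_apply_apply, ← mem_orthogonal_singleton_iff_inner_right]
  refine span_le.mpr (Set.range_subset_iff.mpr fun j => ?_) hx
  exact mem_orthogonal_singleton_iff_inner_right.mpr
    (b.orthonormal.inner_eq_zero (ne_of_mem_of_not_mem j.2 hi).symm)

namespace LinearMap.IsSymmetric

variable {𝕜 E : Type*} [RCLike 𝕜] [NormedAddCommGroup E] [InnerProductSpace 𝕜 E]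
  [FiniteDimensional 𝕜 E] {T : E →ₗ[𝕜] E} {n : ℕ} (hT : T.IsSymmetric) (hn : finrank 𝕜 E = n)

theorem re_inner_apply_self_eq_sum (x : E) :
    re ⟪x, T x⟫_𝕜 = ∑ j, hT.eigenvalues hn j * ‖(hT.eigenvectorBasis hn).repr x j‖ ^ 2 := by
  rw [← (hT.eigenvectorBasis hn).repr.inner_map_map, PiLp.inner_apply, map_sum]
  refine Finset.sum_congr rfl fun j _ => ?_
  rw [eigenvectorBasis_apply_self_apply, inner_apply, mul_right_comm, mul_assoc, RCLike.conj_mul,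
    ← ofReal_pow, ← ofReal_mul, ofReal_re]

theorem norm_sq_eq_sum (x : E) :
    ‖x‖ ^ 2 = ∑ j, ‖(hT.eigenvectorBasis hn).repr x j‖ ^ 2 := by
  rw [← (hT.eigenvectorBasis hn).repr.norm_map, EuclideanSpace.norm_sq_eq]

theorem mul_norm_sq_le_re_inner_apply_self {s : Finset (Fin n)} {c : ℝ}
    (hc : ∀ j ∈ s, c ≤ hT.eigenvalues hn j) {x : E}
    (hx : x ∈ span 𝕜 (Set.range fun j : s => hT.eigenvectorBasis hn j)) :
    c * ‖x‖ ^ 2 ≤ re ⟪x, T x⟫_𝕜 := by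
  rw [hT.norm_sq_eq_sum hn, hT.re_inner_apply_self_eq_sum hn, Finset.mul_sum]
  refine Finset.sum_le_sum fun j _ => ?_
  by_cases hj : j ∈ s
  · exact mul_le_mul_of_nonneg_right (hc j hj) (sq_nonneg _)
  · simp [(hT.eigenvectorBasis hn).repr_apply_eq_zero_of_mem_span hx hj]

theorem re_inner_apply_self_le_mul_norm_sq {s : Finset (Fin n)} {c : ℝ}
    (hc : ∀ j ∈ s, hT.eigenvalues hn j ≤ c) {x : E}
    (hx : x ∈ span 𝕜 (Set.range fun j : s => hT.eigenvectorBasis hn j)) :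
    re ⟪x, T x⟫_𝕜 ≤ c * ‖x‖ ^ 2 := by
  rw [hT.norm_sq_eq_sum hn, hT.re_inner_apply_self_eq_sum hn, Finset.mul_sum]
  refine Finset.sum_le_sum fun j _ => ?_
  by_cases hj : j ∈ s
  · exact mul_le_mul_of_nonneg_right (hc j hj) (sq_nonneg _)
  · simp [(hT.eigenvectorBasis hn).repr_apply_eq_zero_of_mem_span hx hj]

theorem finrank_span_eigenvectorBasis (s : Finset (Fin n)) :
    finrank 𝕜 (span 𝕜 (Set.range fun j : s => hT.eigenvectorBasis hn j)) = s.card := by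
  rw [finrank_span_eq_card, Fintype.card_coe]
  exact (hT.eigenvectorBasis hn).orthonormal.linearIndependent.comp _ Subtype.val_injective

/-- Weyl's monotonicity theorem. The span of the top `i + 1` eigenvectors of `T` meets the span
of the bottom `n - i` eigenvectors of `S`, and a nonzero common vector `x` gives
`λᵢ(T) ‖x‖² ≤ re ⟪x, T x⟫ ≤ re ⟪x, S x⟫ ≤ λᵢ(S) ‖x‖²`. -/
theorem eigenvalues_le_eigenvalues {S : E →ₗ[𝕜] E} (hS : S.IsSymmetric) (hTS : T ≤ S)
    (i : Fin n) : hT.eigenvalues hn i ≤ hS.eigenvalues hn i := by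
  obtain ⟨x, ⟨hxT, hxS⟩, hx⟩ := exists_mem_inf_ne_zero_of_finrank_lt_add
    (s := span 𝕜 (Set.range fun j : Finset.Iic i => hT.eigenvectorBasis hn j))
    (t := span 𝕜 (Set.range fun j : Finset.Ici i => hS.eigenvectorBasis hn j)) (by
      rw [hT.finrank_span_eigenvectorBasis, hS.finrank_span_eigenvectorBasis, Fin.card_Iic,
        Fin.card_Ici, hn]
      omega)
  have hTx := hT.mul_norm_sq_le_re_inner_apply_self hn
    (fun j hj => hT.eigenvalues_antitone hn (Finset.mem_Iic.mp hj)) hxT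
  have hSx := hS.re_inner_apply_self_le_mul_norm_sq hn
    (fun j hj => hS.eigenvalues_antitone hn (Finset.mem_Ici.mp hj)) hxS
  have hTSx : re ⟪x, T x⟫_𝕜 ≤ re ⟪x, S x⟫_𝕜 := by
    simpa [inner_sub_right] using ((LinearMap.le_def T S).mp hTS).re_inner_nonneg_right x
  exact le_of_mul_le_mul_right (hTx.trans (hTSx.trans hSx)) (by positivity)

end LinearMap.IsSymmetric

theorem Matrix.IsHermitian.eigenvalues_le_eigenvalues {ι 𝕜 : Type*} [Fintype ι] [DecidableEq ι]
    [RCLike 𝕜] {A B : Matrix ι ι 𝕜} (hA : A.IsHermitian) (hB : B.IsHermitian)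
    (hAB : (B - A).PosSemidef) (i : ι) : hA.eigenvalues i ≤ hB.eigenvalues i :=
  LinearMap.IsSymmetric.eigenvalues_le_eigenvalues _ _ _
    (by rwa [LinearMap.le_def, ← map_sub, isPositive_toEuclideanLin_iff]) _

theorem ConvexOn.apply_update_le {ι : Type*} [DecidableEq ι] {f : (ι → ℝ) → ℝ}
    (hf : ConvexOn ℝ Set.univ f) {x : ι → ℝ} {i : ι} (hflip : f (update x i (-x i)) = f x)
    {c : ℝ} (hc : |c| ≤ |x i|) : f (update x i c) ≤ f x := by
  let φ : ℝ →ᵃ[ℝ] ι → ℝ := AffineMap.lineMap (update x i 0) (update x i 1)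
  have hφ : ∀ t, φ t = update x i t := fun t => by
    ext j
    rcases eq_or_ne j i with rfl | hj
    · simp [φ, AffineMap.lineMap_apply]
    · simp [φ, AffineMap.lineMap_apply, hj]
  have hseg : c ∈ segment ℝ (x i) (-x i) := by
    rw [segment_eq_uIcc]
    rcases abs_cases (x i) with ⟨h, -⟩ | ⟨h, -⟩ <;> rw [h] at hc
    · exact Set.Icc_subset_uIcc' (abs_le.mp hc)
    · exact Set.Icc_subset_uIcc (by simpa using abs_le.mp hc)
  have := (hf.comp_affineMap φ).le_on_segment trivial trivial hseg
  simpa only [Function.comp_apply, hφ, update_eq_self, hflip, max_self] using this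

theorem ConvexOn.le_of_forall_abs_le {ι : Type*} [Fintype ι] [DecidableEq ι]
    {f : (ι → ℝ) → ℝ} (hf : ConvexOn ℝ Set.univ f)
    (hflip : ∀ x i, f (update x i (-x i)) = f x) {x y : ι → ℝ} (hxy : ∀ i, |x i| ≤ |y i|) :
    f x ≤ f y := by
  suffices ∀ s : Finset ι, f (s.piecewise x y) ≤ f y by simpa using this Finset.univ
  intro s
  induction s using Finset.induction_on with
  | empty => simp
  | insert j s hj ih =>
    rw [Finset.piecewise_insert]
    refine (hf.apply_update_le (hflip _ _) ?_).trans ih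
    rw [Finset.piecewise_eq_of_notMem _ _ _ hj]
    exact hxy j

namespace Matrix

variable {ι 𝕜 : Type*} [DecidableEq ι] [RCLike 𝕜] {L : Matrix ι ι 𝕜 → ℝ}

theorem diagonal_update_one_neg_one_mem_unitaryGroup [Fintype ι] (i : ι) :
    diagonal (update (1 : ι → 𝕜) i (-1)) ∈ unitaryGroup ι 𝕜 := by
  rw [mem_unitaryGroup_iff, star_eq_conjTranspose, diagonal_conjTranspose, diagonal_mul_diagonal,
    ← diagonal_one]
  congr 1
  ext j
  rcases eq_or_ne j i with rfl | hj <;> simp [*]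

theorem convexOn_comp_diagonal_ofReal (hL : ConvexOn ℝ Set.univ L) :
    ConvexOn ℝ Set.univ fun d : ι → ℝ => L (diagonal fun i => (d i : 𝕜)) := by
  let φ : (ι → ℝ) →ₗ[ℝ] Matrix ι ι 𝕜 :=
    { toFun := fun d => diagonal fun i => (d i : 𝕜)
      map_add' := fun d e => by simp [← diagonal_add]
      map_smul' := fun c d => by
        ext i j
        by_cases h : i = j <;> simp [h, RCLike.real_smul_eq_coe_mul] }
  exact hL.comp_linearMap φ

section UnitarilyInvariant

variable [Fintype ι] (hL : ∀ U V : unitaryGroup ι 𝕜, ∀ A, L (U * A * V) = L A)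
include hL

theorem apply_diagonal_update_neg (d : ι → ℝ) (i : ι) :
    L (diagonal fun j => (update d i (-d i) j : 𝕜)) = L (diagonal fun j => (d j : 𝕜)) := by
  convert hL ⟨_, diagonal_update_one_neg_one_mem_unitaryGroup i⟩ 1 _ using 2
  rw [Submonoid.coe_one, mul_one, diagonal_mul_diagonal]
  congr 1
  ext j
  rcases eq_or_ne j i with rfl | hj <;> simp [*]

theorem apply_diagonal_le_of_forall_abs_le (hconv : ConvexOn ℝ Set.univ L) {d e : ι → ℝ}
    (hde : ∀ i, |d i| ≤ |e i|) :
    L (diagonal fun i => (d i : 𝕜)) ≤ L (diagonal fun i => (e i : 𝕜)) :=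
  (convexOn_comp_diagonal_ofReal hconv).le_of_forall_abs_le (apply_diagonal_update_neg hL) hde

theorem IsHermitian.apply_eq_apply_diagonal_eigenvalues {A : Matrix ι ι 𝕜}
    (hA : A.IsHermitian) : L A = L (diagonal fun i => (hA.eigenvalues i : 𝕜)) := by
  conv_lhs => rw [hA.spectral_theorem]
  exact hL _ (star hA.eigenvectorUnitary) _

end UnitarilyInvariant

end Matrix

theorem stmt5_general {n : ℕ} (L : Mat n → ℝ)
    (hconv : ConvexOn ℝ Set.univ L)
    (hUI : ∀ (U V : Matrix.unitaryGroup (Fin n) ℂ) (A : Mat n),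
      L ((U : Mat n) * A * (V : Mat n)) = L A)
    (A B : Mat n) (hA : A.PosSemidef) (hB : B.PosSemidef) (hAB : loewnerLE A B) :
    L A ≤ L B := by
  rw [hA.1.apply_eq_apply_diagonal_eigenvalues hUI, hB.1.apply_eq_apply_diagonal_eigenvalues hUI]
  refine apply_diagonal_le_of_forall_abs_le hUI hconv fun i => ?_
  exact abs_le_abs_of_nonneg (hA.eigenvalues_nonneg i)
    (hA.1.eigenvalues_le_eigenvalues hB.1 hAB i)

theorem stmt5 {n : ℕ} (L : Mat n → ℝ)
    (hconv : ConvexOn ℝ Set.univ L) (hpos : ∀ A, 0 ≤ L A) (h0 : L 0 = 0)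
    (hUI : ∀ (U V : Matrix.unitaryGroup (Fin n) ℂ) (A : Mat n),
      L ((U : Mat n) * A * (V : Mat n)) = L A)
    (A B : Mat n) (hA : A.PosSemidef) (hB : B.PosSemidef) (hAB : loewnerLE A B) :
    L A ≤ L B :=
  stmt5_general L hconv hUI A B hA hB hAB

end
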